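/- arXiv:0803.2434 — 3 statements merged into one kernel-verified Lean document; each statement's English description precedes it below -/
import Mathlib

section
/- In the ring R = ℤ[ξ, ξ']/(ξ^{n+1}, (ξ')^{n+1}, ∑_{i=0}^n (−1)^i ξ^i (ξ')^{n−i}), with n ≥ 2, the monomial ξ^n (ξ')^{n−1} is nonzero; equivalently the degree 2(2n−1) component of R is nonzero. -/
/-!
Multiplication by `ξ + ξ'` maps the ideal of relations into the monomial ideal
`J = (ξ^{n+1}, ξ'^{n+1})`: on the third generator this is the identity
`(ξ + ξ') ∑ (-ξ)^i ξ'^{n-i} = ξ'^{n+1} - (-ξ)^{n+1}`. But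
`(ξ + ξ') ξ^n ξ'^{n-1} ≡ ξ^n ξ'^n (mod J)`, and `ξ^n ξ'^n ∉ J`.
-/

open MvPolynomial Finset

theorem Ideal.mul_mem_of_mem_span {R : Type*} [CommSemiring R] {s : Set R} {I : Ideal R} {f q : R}
    (hs : ∀ g ∈ s, g * f ∈ I) (hq : q ∈ Ideal.span s) : q * f ∈ I :=
  Submodule.mem_colon_singleton.mp <|
    Ideal.span_le.mpr (fun g hg => Submodule.mem_colon_singleton.mpr (hs g hg)) hq

theorem alternating_geom_sum₂_mul {R : Type*} [CommRing R] (x y : R) (n : ℕ) :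
    (∑ i ∈ range (n + 1), (-1) ^ i * x ^ i * y ^ (n - i)) * (x + y) =
      y ^ (n + 1) - (-x) ^ (n + 1) := by
  have hsum : ∑ i ∈ range (n + 1), (-1) ^ i * x ^ i * y ^ (n - i)
      = ∑ i ∈ range (n + 1), (-x) ^ i * y ^ (n + 1 - 1 - i) :=
    sum_congr rfl fun i _ => by rw [neg_pow x, add_tsub_cancel_right]
  rw [hsum]
  linear_combination (-1 : R) * geom_sum₂_mul (-x) y (n + 1)

namespace MvPolynomial

theorem coeff_eq_zero_of_mem_span_monomial {σ R : Type*} [CommSemiring R] {s : Set (σ →₀ ℕ)}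
    {p : MvPolynomial σ R} (hp : p ∈ Ideal.span ((fun t => monomial t (1 : R)) '' s))
    {m : σ →₀ ℕ} (hm : ∀ t ∈ s, ¬t ≤ m) : coeff m p = 0 := by
  by_contra h
  obtain ⟨t, ht, htm⟩ := mem_ideal_span_monomial_image.mp hp m (mem_support_iff.mpr h)
  exact hm t ht htm

theorem X_pow_mul_X_pow_notMem_span_X_pow {σ R : Type*} [CommRing R] [Nontrivial R] {i j : σ}
    (hij : i ≠ j) (n : ℕ) :
    (X i : MvPolynomial σ R) ^ n * X j ^ n ∉ Ideal.span {X i ^ (n + 1), X j ^ (n + 1)} := by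
  classical
  intro h
  simp only [X_pow_eq_monomial, monomial_mul, mul_one] at h
  rw [← Set.image_pair (fun t => monomial t (1 : R))] at h
  have := coeff_eq_zero_of_mem_span_monomial h (m := Finsupp.single i n + Finsupp.single j n) ?_
  · rw [coeff_monomial, if_pos rfl] at this
    exact one_ne_zero this
  · rintro t (rfl | rfl) hle
    · simpa [hij] using hle i
    · simpa [hij.symm] using hle j

end MvPolynomial

/-- In `R = ℤ[ξ,ξ']/(ξ^{n+1}, (ξ')^{n+1}, ∑_{i=0}^n (−1)^i ξ^i (ξ')^{n−i})` with
`n ≥ 2`, the top monomial `ξ^n (ξ')^{n-1}` is nonzero. -/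
theorem stmt_3 (n : ℕ) (hn : 2 ≤ n) :
    Ideal.Quotient.mk
      (Ideal.span {(X 0 : MvPolynomial (Fin 2) ℤ) ^ (n + 1), (X 1) ^ (n + 1),
        ∑ i ∈ range (n + 1), (-1 : MvPolynomial (Fin 2) ℤ) ^ i * X 0 ^ i * X 1 ^ (n - i)})
      (X 0 ^ n * X 1 ^ (n - 1)) ≠ 0 := by
  obtain ⟨k, rfl⟩ : ∃ k, n = k + 1 := ⟨n - 1, by omega⟩
  set J : Ideal (MvPolynomial (Fin 2) ℤ) := Ideal.span {X 0 ^ (k + 2), X 1 ^ (k + 2)}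
  have hX0 : X 0 ^ (k + 2) ∈ J := Ideal.subset_span (by simp)
  have hX1 : X 1 ^ (k + 2) ∈ J := Ideal.subset_span (by simp)
  intro h
  have hmul : X 0 ^ (k + 1) * X 1 ^ (k + 1 - 1) * (X 0 + X 1) ∈ J := by
    refine Ideal.mul_mem_of_mem_span ?_ (Ideal.Quotient.eq_zero_iff_mem.mp h)
    rintro g (rfl | rfl | rfl)
    · exact J.mul_mem_right _ hX0
    · exact J.mul_mem_right _ hX1
    · rw [alternating_geom_sum₂_mul, neg_pow]
      exact J.sub_mem hX1 (J.mul_mem_left _ hX0)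
  refine X_pow_mul_X_pow_notMem_span_X_pow (R := ℤ) (by decide : (0 : Fin 2) ≠ 1) (k + 1) ?_
  have hsplit : (X 0 : MvPolynomial (Fin 2) ℤ) ^ (k + 1) * X 1 ^ (k + 1)
      = X 0 ^ (k + 1) * X 1 ^ (k + 1 - 1) * (X 0 + X 1) - X 1 ^ k * X 0 ^ (k + 2) := by
    rw [add_tsub_cancel_right]; ring
  rw [hsplit]
  exact J.sub_mem hmul (J.mul_mem_left _ hX0)
end

section
/- Let n ≥ 2. The graded ring R = ℤ[ξ,ξ']/(ξ^{n+1}, (ξ')^{n+1}, ∑_{i=0}^n (−1)^i ξ^i (ξ')^{n−i}) is a free ℤ-module with basis the monomials ξ^a (ξ')^b with 0 ≤ a ≤ n and 0 ≤ b ≤ n−1. -/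
/-!
Write `S = ∑ (-1)^i ξ^i ξ'^(n-i)`. Since `(ξ + ξ') S = ξ'^(n+1) - (-ξ)^(n+1)`, the relation
`ξ'^(n+1) = 0` already follows from the other two, so `R = ℤ[ξ, ξ'] / (ξ^(n+1), S)`. Over
`A = ℤ[ξ] / (ξ^(n+1))`, free with basis `1, …, ξ^n`, the relation `S` is a monic polynomial of
degree `n` in `ξ'`; hence `R ≅ A[ξ'] / (S)` is free over `A` with basis `1, …, ξ'^(n-1)`, and the
two power bases multiply to the monomial basis of `R` over `ℤ`.
-/

open MvPolynomial Finset

namespace AdjoinRoot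

variable {k : Type*} [CommRing k] (f : Polynomial k)

noncomputable def mvPolynomialToPolynomial :
    MvPolynomial (Fin 2) k →ₐ[k] Polynomial (AdjoinRoot f) :=
  aeval ![Polynomial.C (root f), Polynomial.X]

variable (g : MvPolynomial (Fin 2) k)

theorem eval₂_mvPolynomialToPolynomial {T : Type*} [CommRing T] [Algebra k T]
    (i : AdjoinRoot f →ₐ[k] T) (t : T) :
    (mvPolynomialToPolynomial f g).eval₂ i t = aeval ![i (root f), t] g := by
  have : (Polynomial.eval₂AlgHom i t fun _ ↦ .all _ _).comp (mvPolynomialToPolynomial f) =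
      aeval ![i (root f), t] := by
    ext j
    fin_cases j <;> simp [mvPolynomialToPolynomial]
  exact congr($this g)

local notation "Q" => MvPolynomial (Fin 2) k ⧸ Ideal.span {Polynomial.aeval (X 0) f, g}
local notation "B" => AdjoinRoot (mvPolynomialToPolynomial f g)

noncomputable def quotientSpanToAdjoinRoot : Q →ₐ[k] B :=
  Ideal.Quotient.liftₐ _ (aeval ![ofAlgHom k _ (root f), root _]) fun _ ha ↦ by
    refine (Ideal.span_le (I := RingHom.ker _)).mpr (Set.pair_subset ?_ ?_) ha
    · rw [SetLike.mem_coe, RingHom.mem_ker, ← Polynomial.aeval_algHom_apply, aeval_X,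
        Matrix.cons_val_zero, Polynomial.aeval_algHom_apply, aeval_eq, mk_self, map_zero]
    · rw [SetLike.mem_coe, RingHom.mem_ker, ← eval₂_mvPolynomialToPolynomial, toRingHom_ofAlgHom,
        eval₂_root]

@[simp]
theorem quotientSpanToAdjoinRoot_mk (p : MvPolynomial (Fin 2) k) :
    quotientSpanToAdjoinRoot f g (Ideal.Quotient.mk _ p) =
      aeval ![of _ (root f), root (mvPolynomialToPolynomial f g)] p :=
  rfl

theorem aeval_mk_X_fin_two (I : Ideal (MvPolynomial (Fin 2) k)) (p : MvPolynomial (Fin 2) k) :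
    aeval ![Ideal.Quotient.mk I (X 0), Ideal.Quotient.mk I (X 1)] p = Ideal.Quotient.mk I p := by
  conv_rhs => rw [← Ideal.Quotient.mkₐ_eq_mk k, aeval_unique (Ideal.Quotient.mkₐ k I)]
  congr 2
  ext j
  fin_cases j <;> rfl

noncomputable def adjoinRootToQuotientSpan : B →ₐ[k] Q :=
  liftAlgHom _ (liftAlgHom f (Algebra.ofId k Q) (Ideal.Quotient.mk _ (X 0)) (by
      change Polynomial.aeval _ f = 0
      rw [← Ideal.Quotient.mkₐ_eq_mk k, Polynomial.aeval_algHom_apply,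
        Ideal.Quotient.mkₐ_eq_mk, Ideal.Quotient.eq_zero_iff_mem]
      exact Ideal.subset_span (Set.mem_insert _ _)))
    (Ideal.Quotient.mk _ (X 1)) (by
      rw [eval₂_mvPolynomialToPolynomial, liftAlgHom_root, aeval_mk_X_fin_two,
        Ideal.Quotient.eq_zero_iff_mem]
      exact Ideal.subset_span (Set.mem_insert_of_mem _ rfl))

@[simp]
theorem adjoinRootToQuotientSpan_of_root :
    adjoinRootToQuotientSpan f g (of _ (root f)) = Ideal.Quotient.mk _ (X 0) := by
  simp [adjoinRootToQuotientSpan]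

@[simp]
theorem adjoinRootToQuotientSpan_root :
    adjoinRootToQuotientSpan f g (root _) = Ideal.Quotient.mk _ (X 1) := by
  simp [adjoinRootToQuotientSpan]

noncomputable def quotientSpanEquivAdjoinRoot : Q ≃ₐ[k] B :=
  .ofAlgHom (quotientSpanToAdjoinRoot f g) (adjoinRootToQuotientSpan f g)
    (algHom_ext' (by ext; simp) (by simp))
    (Ideal.Quotient.algHom_ext k <| MvPolynomial.algHom_ext fun j ↦ by fin_cases j <;> simp)

@[simp]
theorem quotientSpanEquivAdjoinRoot_symm_apply (x : B) :
    (quotientSpanEquivAdjoinRoot f g).symm x = adjoinRootToQuotientSpan f g x :=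
  rfl

variable {f g}

noncomputable def quotientSpanBasis (hf : f.Monic) (hg : (mvPolynomialToPolynomial f g).Monic) :
    Module.Basis (Fin f.natDegree × Fin (mvPolynomialToPolynomial f g).natDegree) k Q :=
  ((powerBasis' hf).basis.smulTower (powerBasis' hg).basis).map
    (quotientSpanEquivAdjoinRoot f g).symm.toLinearEquiv

theorem quotientSpanBasis_apply (hf : f.Monic) (hg : (mvPolynomialToPolynomial f g).Monic)
    (ij : Fin f.natDegree × Fin (mvPolynomialToPolynomial f g).natDegree) :
    quotientSpanBasis hf hg ij = Ideal.Quotient.mk _ (X 0 ^ (ij.1 : ℕ) * X 1 ^ (ij.2 : ℕ)) := by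
  have h := congr(adjoinRootToQuotientSpan f g
    $(Module.Basis.smulTower_apply (powerBasis' hf).basis (powerBasis' hg).basis ij))
  simp only [PowerBasis.basis_eq_pow, powerBasis'_gen, Algebra.smul_def, algebraMap_eq, map_mul,
    map_pow, adjoinRootToQuotientSpan_of_root, adjoinRootToQuotientSpan_root] at h
  rw [map_mul, map_pow, map_pow]
  exact h

end AdjoinRoot

theorem pow_succ_eq_neg_pow_succ_add_mul_sum {R : Type*} [CommRing R] (x y : R) (n : ℕ) :
    y ^ (n + 1) = (-x) ^ (n + 1) + (x + y) * ∑ i ∈ range (n + 1), (-1) ^ i * x ^ i * y ^ (n - i) := by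
  have h := geom_sum₂_mul (-x) y (n + 1)
  simp only [Nat.add_sub_cancel, neg_pow x] at h
  linear_combination h

namespace Polynomial

variable {A : Type*} [CommRing A] {c : ℕ → A} (n : ℕ)

theorem natDegree_sum_C_mul_X_pow_sub_le :
    (∑ i ∈ range (n + 1), C (c i) * X ^ (n - i)).natDegree ≤ n :=
  natDegree_sum_le_of_forall_le _ _ fun i _ ↦ (natDegree_C_mul_X_pow_le _ _).trans (Nat.sub_le n i)

theorem coeff_sum_C_mul_X_pow_sub_self :
    (∑ i ∈ range (n + 1), C (c i) * X ^ (n - i)).coeff n = c 0 := by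
  rw [finsetSum_coeff, Finset.sum_eq_single 0]
  · simp
  · intro i hi hi0
    rw [coeff_C_mul_X_pow, if_neg (by have := mem_range.mp hi; omega)]
  · simp

theorem monic_sum_C_mul_X_pow_sub (hc : c 0 = 1) :
    (∑ i ∈ range (n + 1), C (c i) * X ^ (n - i)).Monic :=
  monic_of_natDegree_le_of_coeff_eq_one n (natDegree_sum_C_mul_X_pow_sub_le n)
    ((coeff_sum_C_mul_X_pow_sub_self n).trans hc)

theorem natDegree_sum_C_mul_X_pow_sub [Nontrivial A] (hc : c 0 = 1) :
    (∑ i ∈ range (n + 1), C (c i) * X ^ (n - i)).natDegree = n :=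
  natDegree_eq_of_le_of_coeff_ne_zero (natDegree_sum_C_mul_X_pow_sub_le n)
    ((coeff_sum_C_mul_X_pow_sub_self n).trans hc ▸ one_ne_zero)

end Polynomial

section

variable {k : Type*} [CommRing k] (n : ℕ)

theorem span_X_pow_X_pow_sum_eq :
    Ideal.span {(X 0 : MvPolynomial (Fin 2) k) ^ (n + 1), X 1 ^ (n + 1),
      ∑ i ∈ range (n + 1), (-1 : MvPolynomial (Fin 2) k) ^ i * X 0 ^ i * X 1 ^ (n - i)} =
    Ideal.span {Polynomial.aeval (X 0) (Polynomial.X ^ (n + 1) : Polynomial k),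
      ∑ i ∈ range (n + 1), (-1 : MvPolynomial (Fin 2) k) ^ i * X 0 ^ i * X 1 ^ (n - i)} := by
  rw [Polynomial.aeval_X_pow]
  refine le_antisymm (Ideal.span_le.mpr ?_) (Ideal.span_mono (Set.insert_subset_insert
    (Set.subset_insert _ _)))
  refine Set.insert_subset (Ideal.subset_span (Set.mem_insert _ _)) (Set.insert_subset ?_
    (Set.singleton_subset_iff.mpr (Ideal.subset_span (Set.mem_insert_of_mem _ rfl))))
  refine Ideal.mem_span_pair.mpr ⟨(-1) ^ (n + 1), X 0 + X 1, ?_⟩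
  conv_rhs => rw [pow_succ_eq_neg_pow_succ_add_mul_sum (X 0), neg_pow]

theorem mvPolynomialToPolynomial_sum :
    AdjoinRoot.mvPolynomialToPolynomial (Polynomial.X ^ (n + 1) : Polynomial k)
      (∑ i ∈ range (n + 1), (-1 : MvPolynomial (Fin 2) k) ^ i * X 0 ^ i * X 1 ^ (n - i)) =
    ∑ i ∈ range (n + 1), Polynomial.C ((-1) ^ i * AdjoinRoot.root _ ^ i) * Polynomial.X ^ (n - i) := by
  simp [AdjoinRoot.mvPolynomialToPolynomial]

end

theorem stmt_16_general (n : ℕ) :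
    ∃ b : Module.Basis (Fin (n + 1) × Fin n) ℤ
      (MvPolynomial (Fin 2) ℤ ⧸
        Ideal.span {(X 0 : MvPolynomial (Fin 2) ℤ) ^ (n + 1), (X 1) ^ (n + 1),
          ∑ i ∈ range (n + 1), (-1 : MvPolynomial (Fin 2) ℤ) ^ i * X 0 ^ i * X 1 ^ (n - i)}),
      ∀ a : Fin (n + 1) × Fin n,
        b a = Ideal.Quotient.mk _ (X 0 ^ (a.1 : ℕ) * X 1 ^ (a.2 : ℕ)) := by
  have : Nontrivial (AdjoinRoot (Polynomial.X ^ (n + 1) : Polynomial ℤ)) :=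
    AdjoinRoot.nontrivial _ (by rw [Polynomial.degree_X_pow]; exact_mod_cast n.succ_ne_zero)
  have hf := Polynomial.monic_X_pow (R := ℤ) (n + 1)
  have hg := mvPolynomialToPolynomial_sum (k := ℤ) n ▸
    Polynomial.monic_sum_C_mul_X_pow_sub n (by simp)
  have hdeg := mvPolynomialToPolynomial_sum (k := ℤ) n ▸
    Polynomial.natDegree_sum_C_mul_X_pow_sub n (by simp)
  refine ⟨((AdjoinRoot.quotientSpanBasis hf hg).reindex
    ((finCongr (Polynomial.natDegree_X_pow _)).prodCongr (finCongr hdeg))).map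
    (Ideal.quotientEquivAlgOfEq ℤ (span_X_pow_X_pow_sum_eq n)).symm.toLinearEquiv, fun a ↦ ?_⟩
  simp [AdjoinRoot.quotientSpanBasis_apply]

/-- The ring `R = ℤ[ξ,ξ']/(ξ^{n+1}, (ξ')^{n+1}, ∑_{i=0}^n (−1)^i ξ^i (ξ')^{n−i})`,
`n ≥ 2`, is a free `ℤ`-module with basis the (classes of the) monomials
`ξ^a (ξ')^b` for `0 ≤ a ≤ n`, `0 ≤ b ≤ n − 1`. -/
theorem stmt_16 (n : ℕ) (hn : 2 ≤ n) :
    ∃ b : Module.Basis (Fin (n + 1) × Fin n) ℤ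
      (MvPolynomial (Fin 2) ℤ ⧸
        Ideal.span {(X 0 : MvPolynomial (Fin 2) ℤ) ^ (n + 1), (X 1) ^ (n + 1),
          ∑ i ∈ range (n + 1), (-1 : MvPolynomial (Fin 2) ℤ) ^ i * X 0 ^ i * X 1 ^ (n - i)}),
      ∀ a : Fin (n + 1) × Fin n,
        b a = Ideal.Quotient.mk _ (X 0 ^ (a.1 : ℕ) * X 1 ^ (a.2 : ℕ)) :=
  stmt_16_general n
end

section
/- Let A = ℤ[ξ,ξ']/(ξ^{n+1},(ξ')^{n+1}) with n ≥ 2, let δ_1,…,δ_{n−1} be nonnegative integers and d_1,…,d_{n−1} positive integers. Then in A the coefficient of the element (ξ+ξ')³ · ∏_{α=1}^{n−1}(δ_α ξ + d_α ξ') on ξ²(ξ')^n is ≥ ∏_α d_α > 0; in particular this element is nonzero. -/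
open Finset MvPolynomial

/-- Polynomials with nonnegative coefficients. -/
def NNC (p : MvPolynomial (Fin 2) ℤ) : Prop := ∀ m, 0 ≤ MvPolynomial.coeff m p

lemma NNC_mul {p q : MvPolynomial (Fin 2) ℤ} (hp : NNC p) (hq : NNC q) :
    NNC (p * q) := by
  intro m
  rw [MvPolynomial.coeff_mul]
  exact Finset.sum_nonneg fun x _ => mul_nonneg (hp _) (hq _)

lemma NNC_linear (a b : ℤ) (ha : 0 ≤ a) (hb : 0 ≤ b) :
    NNC (C a * X 0 + C b * X 1) := by
  intro m
  rw [MvPolynomial.coeff_add, MvPolynomial.coeff_C_mul, MvPolynomial.coeff_C_mul]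
  have h0 : (0:ℤ) ≤ MvPolynomial.coeff m (X 0 : MvPolynomial (Fin 2) ℤ) := by
    rw [MvPolynomial.coeff_X']; split <;> norm_num
  have h1 : (0:ℤ) ≤ MvPolynomial.coeff m (X 1 : MvPolynomial (Fin 2) ℤ) := by
    rw [MvPolynomial.coeff_X']; split <;> norm_num
  exact add_nonneg (mul_nonneg ha h0) (mul_nonneg hb h1)

/-- one-term lower bound in the coefficient of a product. -/
lemma coeff_mul_ge {p q : MvPolynomial (Fin 2) ℤ} (hp : NNC p) (hq : NNC q)
    (u v : Fin 2 →₀ ℕ) :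
    MvPolynomial.coeff u p * MvPolynomial.coeff v q ≤
      MvPolynomial.coeff (u + v) (p * q) := by
  rw [MvPolynomial.coeff_mul]
  have hmem : (u, v) ∈ Finset.HasAntidiagonal.antidiagonal (u + v) := by
    simp [Finset.HasAntidiagonal.mem_antidiagonal]
  exact Finset.single_le_sum (fun x _ => mul_nonneg (hp _) (hq _)) hmem

lemma coeff_prod_linear {ι : Type*} (s : Finset ι) (a b : ι → ℤ) :
    MvPolynomial.coeff (Finsupp.single (1 : Fin 2) s.card)
      (∏ i ∈ s, (C (a i) * X 0 + C (b i) * X 1)) = ∏ i ∈ s, b i := by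
  induction s using Finset.cons_induction with
  | empty => simp
  | cons i s hi ih =>
    rw [Finset.prod_cons, Finset.prod_cons, Finset.card_cons]
    set P : MvPolynomial (Fin 2) ℤ := ∏ j ∈ s, (C (a j) * X 0 + C (b j) * X 1) with hP
    have hexp : (C (a i) * X 0 + C (b i) * X 1) * P
        = (C (a i) * P) * X 0 + (C (b i) * P) * X 1 := by ring
    rw [hexp, MvPolynomial.coeff_add, MvPolynomial.coeff_mul_X',
      MvPolynomial.coeff_mul_X']
    have h0 : (0 : Fin 2) ∉ (Finsupp.single (1 : Fin 2) (s.card + 1)).support := by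
      simp [Finsupp.single_apply]
    have h1 : (1 : Fin 2) ∈ (Finsupp.single (1 : Fin 2) (s.card + 1)).support := by
      simp
    rw [if_neg h0, if_pos h1]
    have hsub : Finsupp.single (1 : Fin 2) (s.card + 1) - Finsupp.single 1 1
        = Finsupp.single (1 : Fin 2) s.card := by
      ext j; simp [Finsupp.tsub_apply, Finsupp.single_apply]
    rw [hsub, MvPolynomial.coeff_C_mul, ih, zero_add]

lemma coeff_X0 : MvPolynomial.coeff (Finsupp.single (0 : Fin 2) 1)
    (X 0 + X 1 : MvPolynomial (Fin 2) ℤ) = 1 := by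
  rw [MvPolynomial.coeff_add, MvPolynomial.coeff_X_same, MvPolynomial.coeff_X']
  rw [if_neg]
  · ring
  · intro h
    have := DFunLike.congr_fun h (1 : Fin 2)
    simp [Finsupp.single_apply] at this

lemma coeff_X1 : MvPolynomial.coeff (Finsupp.single (1 : Fin 2) 1)
    (X 0 + X 1 : MvPolynomial (Fin 2) ℤ) = 1 := by
  rw [MvPolynomial.coeff_add, MvPolynomial.coeff_X_same, MvPolynomial.coeff_X']
  rw [if_neg]
  · ring
  · intro h
    have := DFunLike.congr_fun h (1 : Fin 2)
    simp [Finsupp.single_apply] at this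

/-- In `A = ℤ[ξ,ξ']/(ξ^{n+1},(ξ')^{n+1})` with `n ≥ 2`, nonnegative integers `δ_α`
and positive integers `d_α`: the coefficient of `ξ²(ξ')^n` in
`(ξ+ξ')³ ∏_α (δ_α ξ + d_α ξ')` is at least `∏_α d_α > 0`, and the element is
nonzero in `A`. -/
theorem stmt_17 (n : ℕ) (hn : 2 ≤ n) (δ : Fin (n - 1) → ℕ) (d : Fin (n - 1) → ℕ)
    (hd : ∀ α, 1 ≤ d α) :
    (∏ α, (d α : ℤ)) ≤
      MvPolynomial.coeff (Finsupp.single (0 : Fin 2) 2 + Finsupp.single (1 : Fin 2) n)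
        ((X 0 + X 1) ^ 3 * ∏ α, (C (δ α : ℤ) * X 0 + C (d α : ℤ) * X 1)) ∧
    Ideal.Quotient.mk
      (Ideal.span {(X 0 : MvPolynomial (Fin 2) ℤ) ^ (n + 1), (X 1) ^ (n + 1)})
      ((X 0 + X 1) ^ 3 * ∏ α, (C (δ α : ℤ) * X 0 + C (d α : ℤ) * X 1)) ≠ 0 := by
  set Q : MvPolynomial (Fin 2) ℤ := ∏ α, (C (δ α : ℤ) * X 0 + C (d α : ℤ) * X 1) with hQ
  set L : MvPolynomial (Fin 2) ℤ := X 0 + X 1 with hL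
  have hLnn : NNC L := by
    intro m
    have := NNC_linear 1 1 zero_le_one zero_le_one m
    simpa [hL] using this
  have hQnn : NNC Q := by
    rw [hQ]
    apply Finset.prod_induction _ NNC (fun p q => NNC_mul)
      (fun m => by rw [MvPolynomial.coeff_one]; split <;> norm_num)
    intro α _
    exact NNC_linear _ _ (by positivity) (by positivity)
  -- coefficient of X1^(n-1) in Q is ∏ d
  have hcard : (Finset.univ : Finset (Fin (n-1))).card = n - 1 := by simp
  have hQcoeff : MvPolynomial.coeff (Finsupp.single (1 : Fin 2) (n-1)) Q
      = ∏ α, (d α : ℤ) := by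
    have := coeff_prod_linear (Finset.univ : Finset (Fin (n-1)))
      (fun α => (δ α : ℤ)) (fun α => (d α : ℤ))
    rw [hcard] at this
    exact this
  -- decompose the target monomial
  have hdec : Finsupp.single (0 : Fin 2) 2 + Finsupp.single (1 : Fin 2) n
      = Finsupp.single (0 : Fin 2) 1 + (Finsupp.single (0 : Fin 2) 1 +
        (Finsupp.single (1 : Fin 2) 1 + Finsupp.single (1 : Fin 2) (n-1))) := by
    ext j; fin_cases j <;> simp [Finsupp.single_apply] <;> omega
  have key : (∏ α, (d α : ℤ)) ≤
      MvPolynomial.coeff (Finsupp.single (0 : Fin 2) 2 + Finsupp.single (1 : Fin 2) n)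
        (L ^ 3 * Q) := by
    have h3 : L ^ 3 * Q = L * (L * (L * Q)) := by ring
    rw [h3, hdec]
    have step1 : (∏ α, (d α : ℤ)) ≤
        MvPolynomial.coeff (Finsupp.single (1 : Fin 2) 1 + Finsupp.single (1 : Fin 2) (n-1))
          (L * Q) := by
      have := coeff_mul_ge hLnn hQnn (Finsupp.single 1 1) (Finsupp.single 1 (n-1))
      rw [coeff_X1, hQcoeff, one_mul] at this
      exact this
    have hLQnn : NNC (L * Q) := NNC_mul hLnn hQnn
    have step2 : (∏ α, (d α : ℤ)) ≤
        MvPolynomial.coeff (Finsupp.single (0 : Fin 2) 1 +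
          (Finsupp.single (1 : Fin 2) 1 + Finsupp.single (1 : Fin 2) (n-1)))
          (L * (L * Q)) := by
      have := coeff_mul_ge hLnn hLQnn (Finsupp.single 0 1)
        (Finsupp.single 1 1 + Finsupp.single 1 (n-1))
      rw [coeff_X0, one_mul] at this
      exact le_trans step1 this
    have := coeff_mul_ge hLnn (NNC_mul hLnn hLQnn) (Finsupp.single 0 1)
      (Finsupp.single 0 1 + (Finsupp.single 1 1 + Finsupp.single 1 (n-1)))
    rw [coeff_X0, one_mul] at this
    exact le_trans step2 this
  have hdpos : (0:ℤ) < ∏ α, (d α : ℤ) := by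
    apply Finset.prod_pos
    intro α _
    exact_mod_cast hd α
  refine ⟨key, ?_⟩
  intro hzero
  rw [Ideal.Quotient.eq_zero_iff_mem, Ideal.mem_span_pair] at hzero
  obtain ⟨a, b, hab⟩ := hzero
  have hc : MvPolynomial.coeff
      (Finsupp.single (0 : Fin 2) 2 + Finsupp.single (1 : Fin 2) n)
      (a * X 0 ^ (n+1) + b * X 1 ^ (n+1)) = 0 := by
    rw [MvPolynomial.coeff_add, MvPolynomial.X_pow_eq_monomial,
      MvPolynomial.X_pow_eq_monomial, MvPolynomial.coeff_mul_monomial',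
      MvPolynomial.coeff_mul_monomial']
    rw [if_neg, if_neg, add_zero]
    · intro hle
      rw [Finsupp.le_def] at hle
      have := hle (1 : Fin 2)
      simp [Finsupp.single_apply] at this
    · intro hle
      rw [Finsupp.le_def] at hle
      have := hle (0 : Fin 2)
      simp [Finsupp.single_apply] at this
      omega
  rw [hab] at hc
  rw [hc] at key
  exact absurd (lt_of_lt_of_le hdpos key) (lt_irrefl 0)
end
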